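/- In the dyadic setup with Z_{ij} = z(W_i, X_j) bounded and R_{ij} = (1, Z_{ij}')', let N = N_n, M = M_n with N_n + M_n = n and M_n/n → φ ∈ (0,1), and define H_n(ϑ) = −(NM)^{-1} Σ_{i=1}^N Σ_{j=1}^M e(R_{ij}'ϑ)[1 − e(R_{ij}'ϑ)] R_{ij} R_{ij}'. Then for each fixed θ = (α, β')' with α > 0, writing θ_n = (ln(α/n), β')', one has n H_n(θ_n) → Γ(θ) := −α E[exp(Z_{12}'β) R_{12} R_{12}'] in probability as n → ∞. -/

import Mathlib

/-!
At `θ_n = (log(α/n), β')'` the logistic curvature at `R'θ_n` is `x/(1+x)²` with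
`x = (α/n) exp(Z'β)`, so `n e(1 - e) = α exp(Z'β) + O(n⁻¹)` uniformly in the bounded regressors.
Hence every entry of `n H_n(θ_n) - Γ(θ)` is, up to `O(n⁻¹)`, minus the deviation of a dyadic mean
`(NM)⁻¹ Σᵢ Σⱼ f(Wᵢ, Xⱼ)` of a bounded kernel from its expectation. The variance of that mean is
`O(1/N + 1/M)`, so Chebyshev's inequality gives convergence in probability entrywise, hence in
Frobenius norm.
-/

open MeasureTheory ProbabilityTheory Filter
open scoped BigOperators Topology

namespace SparseNet

/-- The logistic function `e(v) = exp(v)/(1 + exp(v))`. -/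
noncomputable def logistic (v : ℝ) : ℝ := Real.exp v / (1 + Real.exp v)

/-- Frobenius norm of a real matrix. -/
noncomputable def frobNorm {m n : ℕ} (M : Matrix (Fin m) (Fin n) ℝ) : ℝ :=
  Real.sqrt (∑ a, ∑ b, (M a b) ^ 2)

/-- Codomains for the combined two-sample family. -/
def pairType (𝒲 𝒳 : Type) : ℕ ⊕ ℕ → Type
  | Sum.inl _ => 𝒲
  | Sum.inr _ => 𝒳

/-- Measurable-space structure on the codomains. -/
def pairMS {𝒲 𝒳 : Type} [MeasurableSpace 𝒲] [MeasurableSpace 𝒳] :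
    ∀ t : ℕ ⊕ ℕ, MeasurableSpace (pairType 𝒲 𝒳 t)
  | Sum.inl _ => inferInstanceAs (MeasurableSpace 𝒲)
  | Sum.inr _ => inferInstanceAs (MeasurableSpace 𝒳)

/-- The combined family `(W_i)_i ∪ (X_j)_j`. -/
def pairFam {Ω 𝒲 𝒳 : Type} (W : ℕ → Ω → 𝒲) (X : ℕ → Ω → 𝒳) :
    ∀ t : ℕ ⊕ ℕ, Ω → pairType 𝒲 𝒳 t
  | Sum.inl i => W i
  | Sum.inr j => X j

variable {Ω 𝒲 𝒳 : Type} {k : ℕ}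

/-- The regressor vector `R_{ij} = (1, z(W_i, X_j)')'`. -/
def Rreg (z : 𝒲 → 𝒳 → Fin k → ℝ) (W : ℕ → Ω → 𝒲) (X : ℕ → Ω → 𝒳)
    (i j : ℕ) (ω : Ω) : Fin (k + 1) → ℝ :=
  Fin.cons 1 (z (W i ω) (X j ω))

/-- The composite-likelihood Hessian
`H(ϑ) = −(NM)⁻¹ Σᵢ Σⱼ e(R_{ij}'ϑ)[1 − e(R_{ij}'ϑ)] R_{ij} R_{ij}'`. -/
noncomputable def Hess (z : 𝒲 → 𝒳 → Fin k → ℝ) (W : ℕ → Ω → 𝒲) (X : ℕ → Ω → 𝒳)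
    (N M : ℕ) (ϑ : Fin (k + 1) → ℝ) (ω : Ω) : Matrix (Fin (k + 1)) (Fin (k + 1)) ℝ :=
  Matrix.of fun a b => -(((N : ℝ) * M)⁻¹ *
    ∑ i ∈ Finset.Icc 1 N, ∑ j ∈ Finset.Icc 1 M,
      logistic (∑ u, Rreg z W X i j ω u * ϑ u) *
        (1 - logistic (∑ u, Rreg z W X i j ω u * ϑ u)) *
        Rreg z W X i j ω a * Rreg z W X i j ω b)

/-- The limiting Hessian `Γ(θ) = −α E[exp(Z_{12}'β) R_{12} R_{12}']`. -/
noncomputable def GammaMat [MeasurableSpace Ω] (μ : Measure Ω)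
    (z : 𝒲 → 𝒳 → Fin k → ℝ) (W : ℕ → Ω → 𝒲) (X : ℕ → Ω → 𝒳)
    (α : ℝ) (β : Fin k → ℝ) : Matrix (Fin (k + 1)) (Fin (k + 1)) ℝ :=
  Matrix.of fun a b => -(α *
    ∫ ω, Real.exp (∑ u, z (W 1 ω) (X 2 ω) u * β u) *
      Rreg z W X 1 2 ω a * Rreg z W X 1 2 ω b ∂μ)

/-- The sparse parametrization `θ_n = (ln(α/n), β')'`. -/
noncomputable def thetaN (n : ℕ) (α : ℝ) (β : Fin k → ℝ) : Fin (k + 1) → ℝ :=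
  Fin.cons (Real.log (α / n)) β

open scoped Finset

lemma logistic_mul_one_sub_logistic (v : ℝ) :
    logistic v * (1 - logistic v) = Real.exp v / (1 + Real.exp v) ^ 2 := by
  have : 0 < 1 + Real.exp v := by positivity
  unfold logistic
  field_simp
  ring

lemma abs_div_one_add_sq_sub_self_le {x : ℝ} (hx : 0 ≤ x) :
    |x / (1 + x) ^ 2 - x| ≤ 2 * x ^ 2 := by
  have hpos : 0 < (1 + x) ^ 2 := by positivity
  rw [abs_le, div_sub' hpos.ne', le_div_iff₀ hpos, div_le_iff₀ hpos]
  constructor <;> nlinarith [pow_nonneg hx 3, pow_nonneg hx 4]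

lemma abs_logistic_mul_one_sub_logistic_log_add_sub_le {c : ℝ} (hc : 0 < c) (t : ℝ) :
    |logistic (Real.log c + t) * (1 - logistic (Real.log c + t)) - c * Real.exp t|
      ≤ 2 * (c * Real.exp t) ^ 2 := by
  rw [logistic_mul_one_sub_logistic, Real.exp_add, Real.exp_log hc]
  exact abs_div_one_add_sq_sub_self_le (by positivity)

lemma sum_mul_le_mul_sum_abs {C : ℝ} {v : Fin k → ℝ} (hv : ∀ u, |v u| ≤ C) (β : Fin k → ℝ) :
    ∑ u, v u * β u ≤ C * ∑ u, |β u| := calc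
  _ ≤ ∑ u, |v u| * |β u| := Finset.sum_le_sum fun u _ => abs_mul (v u) (β u) ▸ le_abs_self _
  _ ≤ ∑ u, C * |β u| := by gcongr with u; exact hv u
  _ = C * ∑ u, |β u| := (Finset.mul_sum _ _ _).symm

lemma frobNorm_le_sum_abs {m n : ℕ} (A : Matrix (Fin m) (Fin n) ℝ) :
    frobNorm A ≤ ∑ a, ∑ b, |A a b| := by
  have hsq : ∑ a, ∑ b, A a b ^ 2 ≤ (∑ a, ∑ b, |A a b|) ^ 2 := calc
    ∑ a, ∑ b, A a b ^ 2 = ∑ a, ∑ b, |A a b| ^ 2 := by simp only [sq_abs]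
    _ ≤ ∑ a, (∑ b, |A a b|) ^ 2 :=
      Finset.sum_le_sum fun a _ => Finset.sum_sq_le_sq_sum_of_nonneg fun b _ => abs_nonneg _
    _ ≤ (∑ a, ∑ b, |A a b|) ^ 2 :=
      Finset.sum_sq_le_sq_sum_of_nonneg fun a _ => Finset.sum_nonneg fun b _ => abs_nonneg _
  exact (Real.sqrt_le_left (Finset.sum_nonneg fun a _ => Finset.sum_nonneg fun b _ =>
    abs_nonneg _)).2 hsq

section InProbability

variable [MeasurableSpace Ω] {μ : Measure Ω} {ι : Type*} {l : Filter ι}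

lemma exists_le_abs_of_le_frobNorm {m n : ℕ} {A : Matrix (Fin m) (Fin n) ℝ} {ε : ℝ}
    (hε : 0 < ε) (h : ε ≤ frobNorm A) : ∃ a b, ε / (m * n + 1) ≤ |A a b| := by
  by_contra! hlt
  have hsum : ∑ a, ∑ b, |A a b| ≤ m * n * (ε / (m * n + 1)) := calc
    ∑ a, ∑ b, |A a b| ≤ ∑ _a : Fin m, ∑ _b : Fin n, ε / (m * n + 1) :=
      Finset.sum_le_sum fun a _ => Finset.sum_le_sum fun b _ => (hlt a b).le
    _ = m * n * (ε / (m * n + 1)) := by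
      simp only [Finset.sum_const, Finset.card_univ, Fintype.card_fin, nsmul_eq_mul]
      ring
  have hlt' : m * n * (ε / (m * n + 1)) < ε := by
    rw [mul_div_assoc', div_lt_iff₀ (by positivity)]
    linarith
  linarith [frobNorm_le_sum_abs A]

lemma tendsto_measure_le_frobNorm {m n : ℕ} {A : ι → Ω → Matrix (Fin m) (Fin n) ℝ}
    (h : ∀ a b δ, 0 < δ → Tendsto (fun i => μ {ω | δ ≤ |A i ω a b|}) l (𝓝 0))
    {ε : ℝ} (hε : 0 < ε) :
    Tendsto (fun i => μ {ω | ε ≤ frobNorm (A i ω)}) l (𝓝 0) := by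
  set δ := ε / (m * n + 1)
  have hδ : 0 < δ := by positivity
  have hsub : ∀ i, {ω | ε ≤ frobNorm (A i ω)} ⊆ ⋃ a, ⋃ b, {ω | δ ≤ |A i ω a b|} := by
    intro i ω hω
    obtain ⟨a, b, hab⟩ := exists_le_abs_of_le_frobNorm hε hω
    exact Set.mem_iUnion₂.2 ⟨a, b, hab⟩
  have hbound : ∀ i, μ {ω | ε ≤ frobNorm (A i ω)} ≤ ∑ a, ∑ b, μ {ω | δ ≤ |A i ω a b|} :=
    fun i => (measure_mono (hsub i)).trans <| (measure_iUnion_fintype_le _ _).trans <|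
      Finset.sum_le_sum fun a _ => measure_iUnion_fintype_le _ _
  have hsum : Tendsto (fun i => ∑ a, ∑ b, μ {ω | δ ≤ |A i ω a b|}) l (𝓝 0) := by
    simpa using tendsto_finsetSum _ fun a _ => tendsto_finsetSum _ fun b _ => h a b δ hδ
  exact tendsto_of_tendsto_of_tendsto_of_le_of_le tendsto_const_nhds hsum
    (fun _ => zero_le) hbound

lemma tendsto_measure_le_abs_of_abs_le_add {Y Z : ι → Ω → ℝ} {c : ι → ℝ}
    (hc : Tendsto c l (𝓝 0)) (hYZ : ∀ᶠ i in l, ∀ ω, |Y i ω| ≤ c i + |Z i ω|)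
    (hZ : ∀ δ, 0 < δ → Tendsto (fun i => μ {ω | δ ≤ |Z i ω|}) l (𝓝 0))
    {δ : ℝ} (hδ : 0 < δ) :
    Tendsto (fun i => μ {ω | δ ≤ |Y i ω|}) l (𝓝 0) := by
  refine tendsto_of_tendsto_of_tendsto_of_le_of_le' tendsto_const_nhds (hZ (δ / 2) (by positivity))
    (Eventually.of_forall fun _ => zero_le) ?_
  filter_upwards [hYZ, hc.eventually (gt_mem_nhds (half_pos hδ))] with i hi hci
  refine measure_mono fun ω hω => ?_
  simp only [Set.mem_ofPred_eq] at hω ⊢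
  linarith [hi ω]

end InProbability

section DyadicArray

variable [MeasurableSpace Ω] {μ : Measure Ω} [IsProbabilityMeasure μ]

lemma abs_covariance_le_of_abs_le {X Y : Ω → ℝ} {B : ℝ} (hX : ∀ ω, |X ω| ≤ B)
    (hY : ∀ ω, |Y ω| ≤ B) : |cov[X, Y; μ]| ≤ 4 * B ^ 2 := by
  have hcenter : ∀ V : Ω → ℝ, (∀ ω, |V ω| ≤ B) → ∀ ω, |V ω - μ[V]| ≤ 2 * B := by
    intro V hV ω
    have hmean : |μ[V]| ≤ B := by
      simpa using norm_integral_le_of_norm_le_const (μ := μ)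
        (ae_of_all _ fun ω => (Real.norm_eq_abs _).trans_le (hV ω))
    linarith [abs_sub (V ω) μ[V], hV ω]
  have hprod : ∀ ω, ‖(X ω - μ[X]) * (Y ω - μ[Y])‖ ≤ 4 * B ^ 2 := fun ω => by
    rw [Real.norm_eq_abs, abs_mul]
    nlinarith [hcenter X hX ω, hcenter Y hY ω, abs_nonneg (X ω - μ[X]),
      abs_nonneg (Y ω - μ[Y])]
  simpa [covariance] using norm_integral_le_of_norm_le_const (μ := μ) (ae_of_all _ hprod)

/-- Only the `#I * #J * (#I + #J)` pairs of entries sharing a row or a column are correlated. -/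
theorem variance_sum_sum_le {ι κ : Type*} (I : Finset ι) (J : Finset κ)
    {Y : ι → κ → Ω → ℝ} {B : ℝ} (hY : ∀ i j, AEStronglyMeasurable (Y i j) μ)
    (hB : ∀ i j ω, |Y i j ω| ≤ B)
    (hindep : ∀ i i' j j', i ≠ i' → j ≠ j' → IndepFun (Y i j) (Y i' j') μ) :
    Var[fun ω => ∑ i ∈ I, ∑ j ∈ J, Y i j ω; μ] ≤ 4 * B ^ 2 * (#I * #J * (#I + #J)) := by
  classical
  have hL2 : ∀ i j, MemLp (Y i j) 2 μ := fun i j =>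
    MemLp.of_bound (hY i j) B (ae_of_all _ fun ω => (Real.norm_eq_abs _).trans_le (hB i j ω))
  have hcov : ∀ i i' j j', cov[Y i j, Y i' j'; μ]
      ≤ 4 * B ^ 2 * ((if i = i' then 1 else 0) + (if j = j' then 1 else 0)) := by
    intro i i' j j'
    have hbound :=
      (le_abs_self _).trans (abs_covariance_le_of_abs_le (μ := μ) (hB i j) (hB i' j'))
    by_cases hij : i = i' ∨ j = j'
    · have hone : (1 : ℝ) ≤ (if i = i' then 1 else 0) + (if j = j' then 1 else 0) := by
        rcases hij with h | h <;> simp only [h, if_true] <;> split_ifs <;> norm_num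
      nlinarith [sq_nonneg B]
    obtain ⟨hi, hj⟩ := not_or.1 hij
    rw [(hindep i i' j j' hi hj).covariance_eq_zero (hL2 _ _) (hL2 _ _)]
    simp [hi, hj]
  rw [variance_fun_sum' (X := fun i ω => ∑ j ∈ J, Y i j ω) fun i _ =>
    memLp_finsetSum J fun j _ => hL2 i j]
  calc ∑ i ∈ I, ∑ i' ∈ I, cov[fun ω => ∑ j ∈ J, Y i j ω, fun ω => ∑ j ∈ J, Y i' j ω; μ]
      = ∑ i ∈ I, ∑ i' ∈ I, ∑ j ∈ J, ∑ j' ∈ J, cov[Y i j, Y i' j'; μ] := by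
        simp only [covariance_fun_sum_fun_sum' (fun j _ => hL2 _ j) (fun j _ => hL2 _ j)]
    _ ≤ ∑ i ∈ I, ∑ i' ∈ I, ∑ j ∈ J, ∑ j' ∈ J,
          4 * B ^ 2 * ((if i = i' then 1 else 0) + (if j = j' then 1 else 0)) := by
        gcongr with i _ i' _ j _ j' _
        exact hcov i i' j j'
    _ = 4 * B ^ 2 * (#I * #J * (#I + #J)) := by
        simp [mul_add, Finset.sum_add_distrib, Finset.sum_ite_eq]
        ring

end DyadicArray

section DyadicMean

variable {W : ℕ → Ω → 𝒲} {X : ℕ → Ω → 𝒳}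

noncomputable def dyadicMean (f : 𝒲 → 𝒳 → ℝ) (W : ℕ → Ω → 𝒲) (X : ℕ → Ω → 𝒳) (N M : ℕ)
    (ω : Ω) : ℝ :=
  ((N : ℝ) * M)⁻¹ * ∑ i ∈ Finset.Icc 1 N, ∑ j ∈ Finset.Icc 1 M, f (W i ω) (X j ω)

lemma abs_dyadicMean_le {f : 𝒲 → 𝒳 → ℝ} {c : ℝ} (hc : 0 ≤ c) (hf : ∀ w x, |f w x| ≤ c)
    (N M : ℕ) (ω : Ω) : |dyadicMean f W X N M ω| ≤ c := by
  have hsum : |∑ i ∈ Finset.Icc 1 N, ∑ j ∈ Finset.Icc 1 M, f (W i ω) (X j ω)| ≤ N * M * c :=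
    calc _ ≤ ∑ i ∈ Finset.Icc 1 N, ∑ j ∈ Finset.Icc 1 M, |f (W i ω) (X j ω)| :=
          (Finset.abs_sum_le_sum_abs _ _).trans <|
            Finset.sum_le_sum fun i _ => Finset.abs_sum_le_sum_abs _ _
      _ ≤ ∑ i ∈ Finset.Icc 1 N, ∑ j ∈ Finset.Icc 1 M, c :=
          Finset.sum_le_sum fun i _ => Finset.sum_le_sum fun j _ => hf _ _
      _ = N * M * c := by
        simp only [Finset.sum_const, Nat.card_Icc, add_tsub_cancel_right, nsmul_eq_mul]
        ring
  rw [dyadicMean, abs_mul, abs_inv, abs_of_nonneg (by positivity)]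
  rcases eq_or_ne ((N : ℝ) * M) 0 with h0 | h0
  · simpa [h0] using hc
  · rw [inv_mul_le_iff₀ (by positivity)]
    exact hsum

lemma const_mul_dyadicMean (c : ℝ) (f : 𝒲 → 𝒳 → ℝ) (N M : ℕ) (ω : Ω) :
    c * dyadicMean f W X N M ω = dyadicMean (fun w x => c * f w x) W X N M ω := by
  simp only [dyadicMean, Finset.mul_sum]
  exact Finset.sum_congr rfl fun i _ => Finset.sum_congr rfl fun j _ => by ring

lemma dyadicMean_sub (f g : 𝒲 → 𝒳 → ℝ) (N M : ℕ) (ω : Ω) :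
    dyadicMean f W X N M ω - dyadicMean g W X N M ω
      = dyadicMean (fun w x => f w x - g w x) W X N M ω := by
  simp only [dyadicMean, Finset.sum_sub_distrib, mul_sub]

variable [MeasurableSpace Ω] [MeasurableSpace 𝒲] [MeasurableSpace 𝒳]
  {μ : Measure Ω} [IsProbabilityMeasure μ]

omit [IsProbabilityMeasure μ] in
lemma indepFun_prodMk_prodMk_of_ne (hindep : iIndepFun (m := pairMS) (pairFam W X) μ)
    (hW : ∀ i, Measurable (W i)) (hX : ∀ j, Measurable (X j)) {i i' j j' : ℕ}
    (hi : i ≠ i') (hj : j ≠ j') :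
    IndepFun (fun ω => (W i ω, X j ω)) (fun ω => (W i' ω, X j' ω)) μ := by
  have hmeas : ∀ t, @Measurable _ _ _ (pairMS t) (pairFam W X t) := by
    rintro (i | j)
    exacts [hW i, hX j]
  exact hindep.indepFun_prodMk_prodMk hmeas (Sum.inl i) (Sum.inr j) (Sum.inl i') (Sum.inr j')
    (by simpa using hi) (by simp) (by simp) (by simpa using hj)

lemma identDistrib_prodMk (hindep : iIndepFun (m := pairMS) (pairFam W X) μ)
    (hW : ∀ i, Measurable (W i)) (hX : ∀ j, Measurable (X j))
    (hidW : ∀ i, IdentDistrib (W i) (W 1) μ μ) (hidX : ∀ j, IdentDistrib (X j) (X 1) μ μ)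
    (i j : ℕ) :
    IdentDistrib (fun ω => (W i ω, X j ω)) (fun ω => (W 1 ω, X 2 ω)) μ μ := by
  have hmap : ∀ i j : ℕ, μ.map (fun ω => (W i ω, X j ω)) = (μ.map (W i)).prod (μ.map (X j)) :=
    fun i j => (indepFun_iff_map_prod_eq_prod_map_map (hW i).aemeasurable
      (hX j).aemeasurable).1 (hindep.indepFun (show (Sum.inl i : ℕ ⊕ ℕ) ≠ Sum.inr j by simp))
  refine ⟨((hW i).prodMk (hX j)).aemeasurable, ((hW 1).prodMk (hX 2)).aemeasurable, ?_⟩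
  rw [hmap, hmap, (hidW i).map_eq, ((hidX j).trans (hidX 2).symm).map_eq]

variable {f : 𝒲 → 𝒳 → ℝ} {B : ℝ}

lemma integral_dyadicMean (hindep : iIndepFun (m := pairMS) (pairFam W X) μ)
    (hW : ∀ i, Measurable (W i)) (hX : ∀ j, Measurable (X j))
    (hidW : ∀ i, IdentDistrib (W i) (W 1) μ μ) (hidX : ∀ j, IdentDistrib (X j) (X 1) μ μ)
    (hf : Measurable (Function.uncurry f)) (hB : ∀ w x, |f w x| ≤ B)
    {N M : ℕ} (hN : N ≠ 0) (hM : M ≠ 0) :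
    μ[dyadicMean f W X N M] = ∫ ω, f (W 1 ω) (X 2 ω) ∂μ := by
  have hint : ∀ i j, Integrable (fun ω => f (W i ω) (X j ω)) μ := fun i j =>
    .of_bound (hf.comp ((hW i).prodMk (hX j))).aestronglyMeasurable B
      (ae_of_all _ fun ω => (Real.norm_eq_abs _).trans_le (hB _ _))
  have hterm : ∀ i j, ∫ ω, f (W i ω) (X j ω) ∂μ = ∫ ω, f (W 1 ω) (X 2 ω) ∂μ := fun i j =>
    ((identDistrib_prodMk hindep hW hX hidW hidX i j).comp hf).integral_eq
  simp only [dyadicMean]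
  rw [integral_const_mul, integral_finsetSum _ fun i _ => integrable_finsetSum _ fun j _ =>
    hint i j]
  simp only [integral_finsetSum _ fun j _ => hint _ j, hterm, Finset.sum_const, Nat.card_Icc,
    add_tsub_cancel_right, nsmul_eq_mul]
  field_simp

lemma variance_dyadicMean_le (hindep : iIndepFun (m := pairMS) (pairFam W X) μ)
    (hW : ∀ i, Measurable (W i)) (hX : ∀ j, Measurable (X j))
    (hf : Measurable (Function.uncurry f)) (hB : ∀ w x, |f w x| ≤ B)
    {N M : ℕ} (hN : N ≠ 0) (hM : M ≠ 0) :
    Var[dyadicMean f W X N M; μ] ≤ 4 * B ^ 2 * ((N : ℝ)⁻¹ + (M : ℝ)⁻¹) := by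
  have hY : ∀ i j, Measurable (fun ω => f (W i ω) (X j ω)) := fun i j =>
    hf.comp ((hW i).prodMk (hX j))
  have hsum := variance_sum_sum_le (μ := μ) (Finset.Icc 1 N) (Finset.Icc 1 M)
    (fun i j => (hY i j).aestronglyMeasurable) (fun i j ω => hB _ _)
    (fun i i' j j' hi hj => (indepFun_prodMk_prodMk_of_ne hindep hW hX hi hj).comp hf hf)
  simp only [Nat.card_Icc, add_tsub_cancel_right] at hsum
  unfold dyadicMean
  rw [variance_const_mul]
  calc ((N : ℝ) * M)⁻¹ ^ 2 * Var[fun ω => ∑ i ∈ Finset.Icc 1 N, ∑ j ∈ Finset.Icc 1 M,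
        f (W i ω) (X j ω); μ]
      ≤ ((N : ℝ) * M)⁻¹ ^ 2 * (4 * B ^ 2 * (N * M * (N + M))) := by gcongr
    _ = 4 * B ^ 2 * ((N : ℝ)⁻¹ + (M : ℝ)⁻¹) := by
      field_simp
      ring

theorem tendsto_measure_le_abs_dyadicMean_sub {ι : Type*} {l : Filter ι}
    (hindep : iIndepFun (m := pairMS) (pairFam W X) μ)
    (hW : ∀ i, Measurable (W i)) (hX : ∀ j, Measurable (X j))
    (hidW : ∀ i, IdentDistrib (W i) (W 1) μ μ) (hidX : ∀ j, IdentDistrib (X j) (X 1) μ μ)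
    (hf : Measurable (Function.uncurry f)) (hB : ∀ w x, |f w x| ≤ B)
    {N M : ι → ℕ} (hN : Tendsto N l atTop) (hM : Tendsto M l atTop) {δ : ℝ} (hδ : 0 < δ) :
    Tendsto (fun n => μ {ω | δ ≤ |dyadicMean f W X (N n) (M n) ω
      - ∫ ω, f (W 1 ω) (X 2 ω) ∂μ|}) l (𝓝 0) := by
  have hinv : ∀ {K : ι → ℕ}, Tendsto K l atTop → Tendsto (fun n => (K n : ℝ)⁻¹) l (𝓝 0) :=
    fun hK => tendsto_inv_atTop_zero.comp (tendsto_natCast_atTop_atTop.comp hK)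
  have hbound : Tendsto (fun n => ENNReal.ofReal
      (4 * B ^ 2 * ((N n : ℝ)⁻¹ + (M n : ℝ)⁻¹) / δ ^ 2)) l (𝓝 0) := by
    simpa using ENNReal.tendsto_ofReal
      (((hinv hN).add (hinv hM)).const_mul (4 * B ^ 2) |>.div_const (δ ^ 2))
  refine tendsto_of_tendsto_of_tendsto_of_le_of_le' tendsto_const_nhds hbound
    (Eventually.of_forall fun _ => zero_le) ?_
  filter_upwards [hN.eventually_ne_atTop 0, hM.eventually_ne_atTop 0] with n hNn hMn
  have hmeas : Measurable (dyadicMean f W X (N n) (M n)) :=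
    Measurable.const_mul (Finset.measurable_sum _ fun i _ => Finset.measurable_sum _ fun j _ =>
      hf.comp ((hW i).prodMk (hX j))) _
  have hL2 : MemLp (dyadicMean f W X (N n) (M n)) 2 μ :=
    .of_bound hmeas.aestronglyMeasurable B
      (ae_of_all _ fun ω => (Real.norm_eq_abs _).trans_le (abs_dyadicMean_le
        ((abs_nonneg _).trans (hB (W 1 ω) (X 1 ω))) hB _ _ ω))
  have hcheb := meas_ge_le_variance_div_sq hL2 hδ
  rw [integral_dyadicMean hindep hW hX hidW hidX hf hB hNn hMn] at hcheb
  refine hcheb.trans (ENNReal.ofReal_le_ofReal ?_)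
  gcongr
  exact variance_dyadicMean_le hindep hW hX hf hB hNn hMn

end DyadicMean

section Hessian

variable {z : 𝒲 → 𝒳 → Fin k → ℝ} {α : ℝ} {β : Fin k → ℝ}

def regressor (z : 𝒲 → 𝒳 → Fin k → ℝ) (w : 𝒲) (x : 𝒳) : Fin (k + 1) → ℝ :=
  Fin.cons 1 (z w x)

noncomputable def hessKernel (z : 𝒲 → 𝒳 → Fin k → ℝ) (ϑ : Fin (k + 1) → ℝ)
    (a b : Fin (k + 1)) (w : 𝒲) (x : 𝒳) : ℝ :=
  logistic (∑ u, regressor z w x u * ϑ u) * (1 - logistic (∑ u, regressor z w x u * ϑ u)) *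
    regressor z w x a * regressor z w x b

noncomputable def gammaKernel (z : 𝒲 → 𝒳 → Fin k → ℝ) (α : ℝ) (β : Fin k → ℝ)
    (a b : Fin (k + 1)) (w : 𝒲) (x : 𝒳) : ℝ :=
  α * Real.exp (∑ u, z w x u * β u) * regressor z w x a * regressor z w x b

lemma Hess_apply (W : ℕ → Ω → 𝒲) (X : ℕ → Ω → 𝒳) (N M : ℕ) (ϑ : Fin (k + 1) → ℝ) (ω : Ω)
    (a b : Fin (k + 1)) :
    Hess z W X N M ϑ ω a b = -dyadicMean (hessKernel z ϑ a b) W X N M ω :=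
  rfl

lemma GammaMat_apply [MeasurableSpace Ω] (μ : Measure Ω) (W : ℕ → Ω → 𝒲) (X : ℕ → Ω → 𝒳)
    (a b : Fin (k + 1)) :
    GammaMat μ z W X α β a b = -∫ ω, gammaKernel z α β a b (W 1 ω) (X 2 ω) ∂μ := by
  simp only [GammaMat, Matrix.of_apply, gammaKernel, ← integral_const_mul, mul_assoc]
  rfl

lemma regressor_dot_thetaN (n : ℕ) (w : 𝒲) (x : 𝒳) :
    ∑ u, regressor z w x u * thetaN n α β u = Real.log (α / n) + ∑ u, z w x u * β u := by
  simp [regressor, thetaN, Fin.sum_univ_succ]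

lemma abs_regressor_le {C : ℝ} {w : 𝒲} {x : 𝒳} (hC : ∀ u, |z w x u| ≤ C) (a : Fin (k + 1)) :
    |regressor z w x a| ≤ max 1 C := by
  induction a using Fin.cases with
  | zero => simp [regressor]
  | succ u => simpa [regressor] using (hC u).trans (le_max_right 1 C)

lemma abs_mul_hessKernel_thetaN_sub_gammaKernel_le {C T : ℝ} (hα : 0 < α) {n : ℕ} (hn : n ≠ 0)
    {w : 𝒲} {x : 𝒳} (hR : ∀ a, |regressor z w x a| ≤ C) (hT : ∑ u, z w x u * β u ≤ T)
    (a b : Fin (k + 1)) :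
    |n * hessKernel z (thetaN n α β) a b w x - gammaKernel z α β a b w x|
      ≤ 2 * α ^ 2 * Real.exp (2 * T) * C ^ 2 / n := by
  set t := ∑ u, z w x u * β u
  have hn0 : (0 : ℝ) < n := by positivity
  have hcurv : |n * (logistic (Real.log (α / n) + t) * (1 - logistic (Real.log (α / n) + t)))
      - α * Real.exp t| ≤ 2 * α ^ 2 * Real.exp (2 * T) / n := by
    have h := abs_logistic_mul_one_sub_logistic_log_add_sub_le (div_pos hα hn0) t
    have hexp : Real.exp t ^ 2 ≤ Real.exp (2 * T) := by
      rw [← Real.exp_nat_mul]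
      exact Real.exp_le_exp.2 (by push_cast; linarith)
    calc _ = |n * (logistic (Real.log (α / n) + t) * (1 - logistic (Real.log (α / n) + t))
          - α / n * Real.exp t)| := by
            congr 1
            field_simp
      _ = n * |logistic (Real.log (α / n) + t) * (1 - logistic (Real.log (α / n) + t))
          - α / n * Real.exp t| := by rw [abs_mul, abs_of_pos hn0]
      _ ≤ n * (2 * (α / n * Real.exp t) ^ 2) := by gcongr
      _ = 2 * α ^ 2 * Real.exp t ^ 2 / n := by field_simp
      _ ≤ 2 * α ^ 2 * Real.exp (2 * T) / n := by gcongr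
  have hfactor : n * hessKernel z (thetaN n α β) a b w x - gammaKernel z α β a b w x
      = (n * (logistic (Real.log (α / n) + t) * (1 - logistic (Real.log (α / n) + t)))
        - α * Real.exp t) * regressor z w x a * regressor z w x b := by
    simp only [hessKernel, gammaKernel, regressor_dot_thetaN]
    ring
  rw [hfactor, abs_mul, abs_mul]
  have hC : 0 ≤ C := (abs_nonneg _).trans (hR a)
  calc _ ≤ 2 * α ^ 2 * Real.exp (2 * T) / n * C * C :=
        mul_le_mul (mul_le_mul hcurv (hR a) (abs_nonneg _) (by positivity)) (hR b)
          (abs_nonneg _) (by positivity)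
    _ = 2 * α ^ 2 * Real.exp (2 * T) * C ^ 2 / n := by ring

lemma abs_gammaKernel_le {C T : ℝ} (hα : 0 < α) (hR : ∀ w x a, |regressor z w x a| ≤ C)
    (hT : ∀ w x, ∑ u, z w x u * β u ≤ T) (a b : Fin (k + 1)) (w : 𝒲) (x : 𝒳) :
    |gammaKernel z α β a b w x| ≤ α * Real.exp T * C ^ 2 := by
  have hC : 0 ≤ C := (abs_nonneg _).trans (hR w x a)
  rw [gammaKernel, abs_mul, abs_mul, abs_mul, abs_of_pos hα, abs_of_pos (Real.exp_pos _), sq,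
    ← mul_assoc]
  gcongr
  exacts [hT w x, hR w x a, hR w x b]

lemma measurable_gammaKernel [MeasurableSpace 𝒲] [MeasurableSpace 𝒳]
    (hz : Measurable (Function.uncurry z)) (α : ℝ) (β : Fin k → ℝ) (a b : Fin (k + 1)) :
    Measurable (Function.uncurry (gammaKernel z α β a b)) := by
  have hR : ∀ c : Fin (k + 1), Measurable fun p : 𝒲 × 𝒳 => regressor z p.1 p.2 c := by
    intro c
    induction c using Fin.cases with
    | zero => exact measurable_const
    | succ u => exact (measurable_pi_apply u).comp hz
  have ht : Measurable fun p : 𝒲 × 𝒳 => ∑ u, z p.1 p.2 u * β u :=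
    Finset.measurable_sum _ fun u _ => ((measurable_pi_apply u).comp hz).mul_const _
  exact ((measurable_const.mul (Real.measurable_exp.comp ht)).mul (hR a)).mul (hR b)

lemma abs_smul_Hess_sub_GammaMat_apply_le [MeasurableSpace Ω] (μ : Measure Ω)
    (W : ℕ → Ω → 𝒲) (X : ℕ → Ω → 𝒳) {C T : ℝ} (hα : 0 < α) {n : ℕ} (hn : n ≠ 0)
    (hR : ∀ w x a, |regressor z w x a| ≤ C) (hT : ∀ w x, ∑ u, z w x u * β u ≤ T)
    (N M : ℕ) (ω : Ω) (a b : Fin (k + 1)) :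
    |((n : ℝ) • Hess z W X N M (thetaN n α β) ω - GammaMat μ z W X α β) a b|
      ≤ 2 * α ^ 2 * Real.exp (2 * T) * C ^ 2 / n
        + |dyadicMean (gammaKernel z α β a b) W X N M ω
          - ∫ ω, gammaKernel z α β a b (W 1 ω) (X 2 ω) ∂μ| := by
  have hsplit : ((n : ℝ) • Hess z W X N M (thetaN n α β) ω - GammaMat μ z W X α β) a b
      = -dyadicMean (fun w x => n * hessKernel z (thetaN n α β) a b w x
          - gammaKernel z α β a b w x) W X N M ω
        - (dyadicMean (gammaKernel z α β a b) W X N M ω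
          - ∫ ω, gammaKernel z α β a b (W 1 ω) (X 2 ω) ∂μ) := by
    rw [Matrix.sub_apply, Matrix.smul_apply, smul_eq_mul, Hess_apply, GammaMat_apply,
      ← dyadicMean_sub, ← const_mul_dyadicMean]
    ring
  rw [hsplit]
  refine (abs_sub _ _).trans (add_le_add_left ?_ _)
  rw [abs_neg]
  exact abs_dyadicMean_le (by positivity) (fun w x =>
    abs_mul_hessKernel_thetaN_sub_gammaKernel_le hα hn (hR w x) (hT w x) a b) N M ω

end Hessian

/-- pointwise (in `θ`) convergence in probability of the rescaled
composite-likelihood Hessian: `n H_n(θ_n) → Γ(θ)` under sparse asymptotics. -/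
theorem statement14
    [MeasurableSpace Ω] [MeasurableSpace 𝒲] [MeasurableSpace 𝒳]
    (μ : Measure Ω) [IsProbabilityMeasure μ]
    (W : ℕ → Ω → 𝒲) (X : ℕ → Ω → 𝒳)
    (hWmeas : ∀ i, Measurable (W i)) (hXmeas : ∀ j, Measurable (X j))
    (hindep : iIndepFun (m := pairMS) (pairFam W X) μ)
    (hidW : ∀ i, IdentDistrib (W i) (W 1) μ μ)
    (hidX : ∀ j, IdentDistrib (X j) (X 1) μ μ)
    (z : 𝒲 → 𝒳 → Fin k → ℝ) (hzmeas : Measurable fun p : 𝒲 × 𝒳 => z p.1 p.2)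
    (hzbd : ∃ C : ℝ, ∀ w x u, |z w x u| ≤ C)
    (N M : ℕ → ℕ) (hNM : ∀ n, N n + M n = n)
    (φ : ℝ) (hφ : φ ∈ Set.Ioo (0 : ℝ) 1)
    (hMφ : Tendsto (fun n : ℕ => (M n : ℝ) / n) atTop (𝓝 φ))
    (α : ℝ) (hα : 0 < α) (β : Fin k → ℝ) :
    ∀ ε : ℝ, 0 < ε →
      Tendsto (fun n : ℕ =>
          μ {ω | ε ≤ frobNorm
              ((n : ℝ) • Hess z W X (N n) (M n) (thetaN n α β) ω -
                GammaMat μ z W X α β)})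
        atTop (𝓝 0) := by
  intro ε hε
  obtain ⟨C, hC⟩ := hzbd
  have hR : ∀ w x a, |regressor z w x a| ≤ max 1 C := fun w x => abs_regressor_le (hC w x)
  have hT : ∀ w x, ∑ u, z w x u * β u ≤ C * ∑ u, |β u| := fun w x =>
    sum_mul_le_mul_sum_abs (hC w x) β
  have hNφ : Tendsto (fun n : ℕ => (N n : ℝ) / n) atTop (𝓝 (1 - φ)) := by
    refine (tendsto_const_nhds.sub hMφ).congr' ?_
    filter_upwards [eventually_ne_atTop 0] with n hn
    have hsum : (N n : ℝ) + M n = n := by exact_mod_cast hNM n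
    field_simp
    linarith
  have hM : Tendsto M atTop atTop :=
    tendsto_natCast_atTop_iff.1 (tendsto_natCast_atTop_atTop.num hφ.1 hMφ)
  have hN : Tendsto N atTop atTop :=
    tendsto_natCast_atTop_iff.1 (tendsto_natCast_atTop_atTop.num (sub_pos.2 hφ.2) hNφ)
  refine tendsto_measure_le_frobNorm (fun a b δ hδ => ?_) hε
  refine tendsto_measure_le_abs_of_abs_le_add (tendsto_const_div_atTop_nhds_zero_nat
    (2 * α ^ 2 * Real.exp (2 * (C * ∑ u, |β u|)) * max 1 C ^ 2)) ?_
    (fun δ hδ => tendsto_measure_le_abs_dyadicMean_sub hindep hWmeas hXmeas hidW hidX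
      (measurable_gammaKernel hzmeas α β a b) (abs_gammaKernel_le hα hR hT a b) hN hM hδ) hδ
  filter_upwards [eventually_ne_atTop 0] with n hn ω
  exact abs_smul_Hess_sub_GammaMat_apply_le μ W X hα hn hR hT _ _ ω a b

end SparseNet
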